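/- (Spatial L¹ modulus of continuity of the heat kernels.) Let p denote either the periodic heat kernel p^{per} or the Neumann heat kernel p^{Neu} on [0,1]. There exists a constant C > 0 such that for every t ∈ (0,1] and every x, y ∈ [0,1]: ∫_0^1 | p_t(x,z) − p_t(y,z) | dz ≤ C |x − y| t^{−1/2}. -/

import Mathlib

open MeasureTheory

/-- The one-dimensional Gaussian heat kernel `Γ(t,x) = (2πt)^{-1/2} exp(-x²/(2t))`. -/
noncomputable def heatGamma (t x : ℝ) : ℝ :=
  (2 * Real.pi * t) ^ (-(1:ℝ)/2) * Real.exp (-x ^ 2 / (2 * t))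

/-- The periodic heat kernel on `[0,1]`. -/
noncomputable def pPer (t x y : ℝ) : ℝ := ∑' n : ℤ, heatGamma t (x - y + n)

/-- The Neumann heat kernel on `[0,1]`. -/
noncomputable def pNeu (t x y : ℝ) : ℝ :=
  ∑' n : ℤ, (heatGamma t (x - y + 2 * n) + heatGamma t (x + y + 2 * n))

/-!
Bound `|p_t(x,·) - p_t(y,·)|` by the sum of the differences of the Gaussian images. Integrating
over `[0,1]` unfolds that sum: the translates of `[0,1]` (periodic case), resp. of `[-1,1]` after
reflecting the images `x + z + 2n` (Neumann case), tile `ℝ`, so both integrals are at most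
`∫_ℝ |Γ(t,x+u) - Γ(t,y+u)| du`. Two translates of a Gaussian cross exactly once, so this equals
twice the Gaussian mass of an interval of length `|x-y|`, hence is at most
`2 (2πt)^{-1/2} |x-y| ≤ |x-y| t^{-1/2}`: the constant `C = 1` works for both kernels.
-/

open Set
open scoped ENNReal

lemma lintegral_eq_tsum_setLIntegral_Ioc_add_int_mul (f : ℝ → ℝ≥0∞) (a : ℝ) {T : ℝ}
    (hT : 0 < T) :
    ∫⁻ u, f u = ∑' n : ℤ, ∫⁻ u in Ioc a (a + T), f (u + n * T) := by
  rw [← setLIntegral_univ, ← iUnion_Ioc_add_zsmul hT a,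
    lintegral_iUnion (fun _ => measurableSet_Ioc) (pairwise_disjoint_Ioc_add_zsmul a T)]
  refine tsum_congr fun n => ?_
  rw [(measurePreserving_add_right volume (n * T)).setLIntegral_comp_emb
    (measurableEmbedding_addRight _), image_add_const_Ioc]
  congr 3
  · rw [zsmul_eq_mul]
  · rw [add_zsmul, one_zsmul, zsmul_eq_mul]
    ring

lemma setLIntegral_Icc_comp_neg (f : ℝ → ℝ≥0∞) (a b : ℝ) :
    ∫⁻ z in Icc a b, f (-z) = ∫⁻ u in Ioc (-b) (-a), f u := by
  rw [(Measure.measurePreserving_neg volume).setLIntegral_comp_emb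
    (MeasurableEquiv.neg ℝ).measurableEmbedding, image_neg_Icc]
  exact setLIntegral_congr Ioc_ae_eq_Icc.symm

lemma setLIntegral_Icc_comp_neg_add_setLIntegral_Icc (f : ℝ → ℝ≥0∞) {a : ℝ} (ha : 0 ≤ a) :
    (∫⁻ z in Icc 0 a, f (-z)) + ∫⁻ z in Icc 0 a, f z = ∫⁻ u in Ioc (-a) a, f u := by
  rw [setLIntegral_Icc_comp_neg f 0 a, neg_zero, setLIntegral_congr Ioc_ae_eq_Icc.symm,
    ← lintegral_union measurableSet_Ioc (Ioc_disjoint_Ioc_of_le le_rfl),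
    Ioc_union_Ioc_eq_Ioc (by linarith) ha]

lemma ofReal_abs_tsum_sub_tsum_le {ι : Type*} {a b : ι → ℝ} (ha : Summable a)
    (hb : Summable b) :
    ENNReal.ofReal |∑' i, a i - ∑' i, b i| ≤ ∑' i, ENNReal.ofReal |a i - b i| := by
  rw [← ha.tsum_sub hb, ← ENNReal.ofReal_tsum_of_nonneg (fun _ => abs_nonneg _) (ha.sub hb).abs]
  exact ENNReal.ofReal_le_ofReal (by simpa using norm_tsum_le_tsum_norm (ha.sub hb).norm)

lemma integral_le_of_lintegral_ofReal_le {α : Type*} [MeasurableSpace α] {μ : Measure α}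
    {f : α → ℝ} {B : ℝ} (hf : 0 ≤ᵐ[μ] f) (hB : 0 ≤ B)
    (h : ∫⁻ a, ENNReal.ofReal (f a) ∂μ ≤ ENNReal.ofReal B) :
    ∫ a, f a ∂μ ≤ B := by
  by_cases hfi : Integrable f μ
  · rw [integral_eq_lintegral_of_nonneg_ae hf hfi.aestronglyMeasurable]
    exact ENNReal.toReal_le_of_le_ofReal hB h
  · rw [integral_undef hfi]
    exact hB

lemma integral_abs_sub_eq_two_mul_setIntegral_Iic {μ : Measure ℝ} {f g : ℝ → ℝ} {c : ℝ}
    (hf : Integrable f μ) (hg : Integrable g μ) (hfg : ∫ u, f u ∂μ = ∫ u, g u ∂μ)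
    (hle : ∀ u ≤ c, g u ≤ f u) (hge : ∀ u, c < u → f u ≤ g u) :
    ∫ u, |f u - g u| ∂μ = 2 * ∫ u in Iic c, (f u - g u) ∂μ := by
  have hd : Integrable (fun u => f u - g u) μ := hf.sub hg
  have hIic : ∫ u in Iic c, |f u - g u| ∂μ = ∫ u in Iic c, (f u - g u) ∂μ :=
    setIntegral_congr_fun measurableSet_Iic fun u hu => abs_of_nonneg (sub_nonneg.2 (hle u hu))
  have hIoi : ∫ u in Ioi c, |f u - g u| ∂μ = -∫ u in Ioi c, (f u - g u) ∂μ := by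
    rw [← integral_neg]
    exact setIntegral_congr_fun measurableSet_Ioi fun u hu =>
      abs_of_nonpos (sub_nonpos.2 (hge u hu))
  have htotal : ∫ u in Iic c, (f u - g u) ∂μ + ∫ u in Ioi c, (f u - g u) ∂μ = 0 := by
    rw [← compl_Iic, integral_add_compl measurableSet_Iic hd, integral_sub hf hg, hfg, sub_self]
  rw [← integral_add_compl measurableSet_Iic hd.abs, compl_Iic, hIic, hIoi]
  linarith

lemma setIntegral_Iic_comp_add_left (f : ℝ → ℝ) (a c : ℝ) :
    ∫ u in Iic c, f (a + u) = ∫ u in Iic (a + c), f u := by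
  have := (measurePreserving_add_left volume a).setIntegral_preimage_emb
    (measurableEmbedding_addLeft a) f (Iic (a + c))
  simpa [preimage_const_add_Iic] using this

section HeatGamma

variable {t : ℝ}

lemma heatGamma_le_heatGamma (ht : 0 < t) {v w : ℝ} (h : v ^ 2 ≤ w ^ 2) :
    heatGamma t w ≤ heatGamma t v := by
  unfold heatGamma
  gcongr

lemma heatGamma_le (ht : 0 < t) (v : ℝ) : heatGamma t v ≤ (2 * Real.pi * t) ^ (-(1:ℝ)/2) := by
  simpa [heatGamma] using heatGamma_le_heatGamma ht (v := 0) (w := v) (by simp [sq_nonneg])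

@[fun_prop]
lemma continuous_heatGamma (t : ℝ) : Continuous (heatGamma t) := by
  unfold heatGamma
  fun_prop

lemma integrable_heatGamma (ht : 0 < t) : Integrable (heatGamma t) := by
  have h := (integrable_exp_neg_mul_sq (inv_pos.2 (mul_pos two_pos ht))).const_mul
    ((2 * Real.pi * t) ^ (-(1:ℝ)/2))
  refine h.congr (ae_of_all _ fun u => ?_)
  simp only [heatGamma, neg_mul, div_eq_inv_mul]
  ring_nf

lemma summable_heatGamma_add_mul_int (ht : 0 < t) (b : ℝ) {c : ℝ} (hc : c ≠ 0) :
    Summable fun n : ℤ => heatGamma t (b + c * n) := by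
  have hT : 0 < c ^ 2 / (2 * Real.pi * t) := by positivity
  refine ((HurwitzKernelBounds.summable_f_int 0 (b / c) hT).mul_left
    ((2 * Real.pi * t) ^ (-(1:ℝ)/2))).congr fun n => ?_
  simp only [HurwitzKernelBounds.f_int, pow_zero, one_mul, heatGamma]
  congr 2
  field_simp
  ring

lemma two_mul_rpow_neg_half_le (ht : 0 < t) :
    2 * (2 * Real.pi * t) ^ (-(1:ℝ)/2) ≤ t ^ (-(1:ℝ)/2) := by
  have h4 : (4:ℝ) ^ (-(1:ℝ)/2) = 1 / 2 := by
    rw [show (4:ℝ) = 2 ^ (2:ℝ) by norm_num, ← Real.rpow_mul zero_le_two]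
    norm_num
  calc 2 * (2 * Real.pi * t) ^ (-(1:ℝ)/2)
      ≤ 2 * (4 * t) ^ (-(1:ℝ)/2) := by
        gcongr 2 * ?_
        exact Real.rpow_le_rpow_of_nonpos (by positivity)
          (by nlinarith [Real.pi_gt_three]) (by norm_num)
    _ = t ^ (-(1:ℝ)/2) := by
        rw [Real.mul_rpow zero_le_four ht.le, h4]
        ring

lemma integral_abs_heatGamma_add_sub_le (ht : 0 < t) (x y : ℝ) :
    ∫ u, |heatGamma t (x + u) - heatGamma t (y + u)| ≤ |x - y| * t ^ (-(1:ℝ)/2) := by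
  wlog hxy : y ≤ x generalizing x y
  · simpa only [abs_sub_comm] using this y x (le_of_not_ge hxy)
  have hΓ := integrable_heatGamma ht
  have hshift : ∀ a, Integrable fun u => heatGamma t (a + u) := fun a => hΓ.comp_add_left a
  -- `Γ(t, x + ·)` and `Γ(t, y + ·)` cross only at `c`, where `|x + c| = |y + c|`.
  set c := -(x + y) / 2 with hc
  rw [integral_abs_sub_eq_two_mul_setIntegral_Iic (c := c) (hshift x) (hshift y)
      (by rw [integral_add_left_eq_self, integral_add_left_eq_self])
      (fun u hu => heatGamma_le_heatGamma ht
        (by nlinarith [mul_nonneg (sub_nonneg.2 hxy) (by linarith : 0 ≤ -(x + y) - 2 * u)]))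
      (fun u hu => heatGamma_le_heatGamma ht
        (by nlinarith [mul_nonneg (sub_nonneg.2 hxy) (by linarith : 0 ≤ x + y + 2 * u)])),
    integral_sub (hshift x).integrableOn (hshift y).integrableOn,
    setIntegral_Iic_comp_add_left, setIntegral_Iic_comp_add_left,
    intervalIntegral.integral_Iic_sub_Iic hΓ.integrableOn hΓ.integrableOn]
  have hmass : ∫ u in y + c..x + c, heatGamma t u ≤ (2 * Real.pi * t) ^ (-(1:ℝ)/2) * (x - y) := by
    refine (Real.le_norm_self _).trans <| (intervalIntegral.norm_integral_le_of_norm_le_const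
      (C := (2 * Real.pi * t) ^ (-(1:ℝ)/2)) fun u _ => ?_).trans_eq ?_
    · rw [Real.norm_of_nonneg (by unfold heatGamma; positivity)]
      exact heatGamma_le ht u
    · rw [add_sub_add_right_eq_sub, abs_of_nonneg (sub_nonneg.2 hxy)]
  rw [abs_of_nonneg (sub_nonneg.2 hxy)]
  nlinarith [two_mul_rpow_neg_half_le ht]

end HeatGamma

noncomputable def heatGammaDiff (t x y u : ℝ) : ℝ≥0∞ :=
  ENNReal.ofReal |heatGamma t (x + u) - heatGamma t (y + u)|

section HeatGammaDiff

variable {t : ℝ}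

@[fun_prop]
lemma measurable_heatGammaDiff (t x y : ℝ) : Measurable (heatGammaDiff t x y) := by
  unfold heatGammaDiff
  fun_prop

lemma lintegral_heatGammaDiff_le (ht : 0 < t) (x y : ℝ) :
    ∫⁻ u, heatGammaDiff t x y u ≤ ENNReal.ofReal (|x - y| * t ^ (-(1:ℝ)/2)) := by
  have hint : Integrable fun u => |heatGamma t (x + u) - heatGamma t (y + u)| :=
    ((integrable_heatGamma ht).comp_add_left x).sub
      ((integrable_heatGamma ht).comp_add_left y) |>.abs
  unfold heatGammaDiff
  rw [← ofReal_integral_eq_lintegral_ofReal hint (ae_of_all _ fun _ => abs_nonneg _)]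
  exact ENNReal.ofReal_le_ofReal (integral_abs_heatGamma_add_sub_le ht x y)

lemma ofReal_abs_pPer_sub_le (ht : 0 < t) (x y z : ℝ) :
    ENNReal.ofReal |pPer t x z - pPer t y z| ≤ ∑' n : ℤ, heatGammaDiff t x y (-z + n) := by
  have hs : ∀ a, Summable fun n : ℤ => heatGamma t (a - z + n) := fun a => by
    simpa only [one_mul] using summable_heatGamma_add_mul_int ht (a - z) one_ne_zero
  refine (ofReal_abs_tsum_sub_tsum_le (hs x) (hs y)).trans_eq (tsum_congr fun n => ?_)
  simp only [heatGammaDiff]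
  ring_nf

lemma ofReal_abs_pNeu_sub_le (ht : 0 < t) (x y z : ℝ) :
    ENNReal.ofReal |pNeu t x z - pNeu t y z|
      ≤ ∑' n : ℤ, (heatGammaDiff t x y (-z + n * 2) + heatGammaDiff t x y (z + n * 2)) := by
  have hs : ∀ a, Summable fun n : ℤ => heatGamma t (a - z + 2 * n) + heatGamma t (a + z + 2 * n) :=
    fun a => (summable_heatGamma_add_mul_int ht (a - z) two_ne_zero).add
      (summable_heatGamma_add_mul_int ht (a + z) two_ne_zero)
  refine (ofReal_abs_tsum_sub_tsum_le (hs x) (hs y)).trans (ENNReal.tsum_le_tsum fun n => ?_)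
  rw [heatGammaDiff, heatGammaDiff, ← ENNReal.ofReal_add (abs_nonneg _) (abs_nonneg _)]
  refine ENNReal.ofReal_le_ofReal ((abs_add_le _ _).trans_eq' ?_)
  ring_nf

lemma setLIntegral_ofReal_abs_pPer_sub_le (ht : 0 < t) (x y : ℝ) :
    ∫⁻ z in Icc 0 1, ENNReal.ofReal |pPer t x z - pPer t y z| ≤ ∫⁻ u, heatGammaDiff t x y u := by
  calc ∫⁻ z in Icc 0 1, ENNReal.ofReal |pPer t x z - pPer t y z|
      ≤ ∫⁻ z in Icc 0 1, ∑' n : ℤ, heatGammaDiff t x y (-z + n) :=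
        lintegral_mono fun z => ofReal_abs_pPer_sub_le ht x y z
    _ = ∑' n : ℤ, ∫⁻ z in Icc 0 1, heatGammaDiff t x y (-z + n) :=
        lintegral_tsum fun n => by fun_prop
    _ = ∑' n : ℤ, ∫⁻ u in Ioc (-1) 0, heatGammaDiff t x y (u + n) :=
        tsum_congr fun n => (setLIntegral_Icc_comp_neg
          (fun u => heatGammaDiff t x y (u + n)) 0 1).trans (by rw [neg_zero])
    _ = ∫⁻ u, heatGammaDiff t x y u := by
        simpa only [mul_one, neg_add_cancel] using
          (lintegral_eq_tsum_setLIntegral_Ioc_add_int_mul _ (-1) one_pos).symm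

lemma setLIntegral_ofReal_abs_pNeu_sub_le (ht : 0 < t) (x y : ℝ) :
    ∫⁻ z in Icc 0 1, ENNReal.ofReal |pNeu t x z - pNeu t y z| ≤ ∫⁻ u, heatGammaDiff t x y u := by
  calc ∫⁻ z in Icc 0 1, ENNReal.ofReal |pNeu t x z - pNeu t y z|
      ≤ ∫⁻ z in Icc 0 1, ∑' n : ℤ,
          (heatGammaDiff t x y (-z + n * 2) + heatGammaDiff t x y (z + n * 2)) :=
        lintegral_mono fun z => ofReal_abs_pNeu_sub_le ht x y z
    _ = ∑' n : ℤ, ((∫⁻ z in Icc 0 1, heatGammaDiff t x y (-z + n * 2))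
          + ∫⁻ z in Icc 0 1, heatGammaDiff t x y (z + n * 2)) := by
        rw [lintegral_tsum fun n => by fun_prop]
        exact tsum_congr fun n => lintegral_add_left (by fun_prop) _
    _ = ∑' n : ℤ, ∫⁻ u in Ioc (-1) (-1 + 2), heatGammaDiff t x y (u + n * 2) :=
        tsum_congr fun n => by
          rw [show (-1 : ℝ) + 2 = 1 by norm_num]
          exact setLIntegral_Icc_comp_neg_add_setLIntegral_Icc
            (fun u => heatGammaDiff t x y (u + n * 2)) zero_le_one
    _ = ∫⁻ u, heatGammaDiff t x y u :=
        (lintegral_eq_tsum_setLIntegral_Ioc_add_int_mul _ (-1) two_pos).symm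

end HeatGammaDiff

theorem heat_kernel_L1_modulus_of_continuity
    (p : ℝ → ℝ → ℝ → ℝ) (hp : p = pPer ∨ p = pNeu) :
    ∃ C : ℝ, 0 < C ∧ ∀ t : ℝ, 0 < t → t ≤ 1 →
      ∀ x ∈ Set.Icc (0:ℝ) 1, ∀ y ∈ Set.Icc (0:ℝ) 1,
        ∫ z in Set.Icc (0:ℝ) 1, |p t x z - p t y z|
          ≤ C * |x - y| * t ^ (-(1:ℝ)/2) := by
  refine ⟨1, one_pos, fun t ht _ x _ y _ => ?_⟩
  have hL1 : ∫⁻ z in Icc 0 1, ENNReal.ofReal |p t x z - p t y z|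
      ≤ ENNReal.ofReal (|x - y| * t ^ (-(1:ℝ)/2)) := by
    refine le_trans ?_ (lintegral_heatGammaDiff_le ht x y)
    rcases hp with rfl | rfl
    · exact setLIntegral_ofReal_abs_pPer_sub_le ht x y
    · exact setLIntegral_ofReal_abs_pNeu_sub_le ht x y
  rw [one_mul]
  exact integral_le_of_lintegral_ofReal_le (ae_of_all _ fun _ => abs_nonneg _) (by positivity) hL1
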